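/- Let P be the uniform distribution on [a,b] with a < b, and let β = {b}. For every n ∈ ℕ with n ≥ 1, the n-th conditional unconstrained quantization error for P with respect to β equals (b−a)²/(3(2n−1)²), and this infimum is attained by the set {a + (2j−1)(b−a)/(2n−1) : 1 ≤ j ≤ n}. -/

import Mathlib

open MeasureTheory Set Filter

/-- The uniform distribution on `[a, b]`: normalized Lebesgue measure restricted to `[a, b]`. -/
noncomputable def uniformOn (a b : ℝ) : Measure ℝ :=
  (ENNReal.ofReal (b - a))⁻¹ • volume.restrict (Set.Icc a b)

/-- The distortion error of a set `s` of points for the measure `P`. -/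
noncomputable def distortion (P : Measure ℝ) (s : Set ℝ) : ℝ :=
  ∫ x, sInf ((fun a => (x - a) ^ 2) '' s) ∂P

/-- The `n`-th conditional (unconstrained) quantization error for `P` with respect to
the conditional set `β`. -/
noncomputable def condQuantError (P : Measure ℝ) (β : Set ℝ) (n : ℕ) : ℝ :=
  sInf { v : ℝ | ∃ α : Set ℝ, α.Finite ∧ α.ncard ≤ n - β.ncard ∧ v = distortion P (α ∪ β) }


/-! For a finite `γ ∋ b` with at most `n` points, the part of `(a, b]` within distance `r` of `γ`
has measure at most `(2n - 1) r`: every point covers an interval of length `2r`, except `b`, which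
covers only `r` inside `(a, b]`. Hence, on `(a, b]`, the distribution of `x ↦ d(x, γ)²` dominates
that of `x ↦ ((b - x) / (2n - 1))²`, and by the layer-cake formula the integral of the former is at
least `(b - a)³ / (3 (2n - 1)²)`. The grid `a + (2j - 1) h`, `h = (b - a) / (2n - 1)`, whose last
point is `b`, attains this bound: each of the `n - 1` full cells contributes `2h³/3` and the half
cell ending at `b` contributes `h³/3`. -/

open Metric

theorem sInf_image_sq_sub_eq_infDist_sq {s : Set ℝ} (hs : s.Finite) (x : ℝ) :
    sInf ((fun a => (x - a) ^ 2) '' s) = infDist x s ^ 2 := by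
  rcases s.eq_empty_or_nonempty with rfl | hne
  · simp
  obtain ⟨c, hc, hxc⟩ := hs.isCompact.exists_infDist_eq_dist hne x
  refine IsLeast.csInf_eq ⟨⟨c, hc, ?_⟩, ?_⟩
  · rw [hxc, Real.dist_eq, sq_abs]
  · rintro _ ⟨y, hy, rfl⟩
    dsimp only
    rw [← sq_abs (x - y), ← Real.dist_eq]
    exact pow_le_pow_left₀ infDist_nonneg (infDist_le_dist_of_mem hy) 2

theorem distortion_uniformOn {a b : ℝ} (hab : a < b) {s : Set ℝ} (hs : s.Finite) :
    distortion (uniformOn a b) s = (b - a)⁻¹ * ∫ x in a..b, infDist x s ^ 2 := by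
  simp only [distortion, uniformOn, sInf_image_sq_sub_eq_infDist_sq hs]
  rw [integral_smul_measure, ENNReal.toReal_inv, ENNReal.toReal_ofReal (sub_nonneg.2 hab.le),
    smul_eq_mul, intervalIntegral.integral_of_le hab.le, integral_Icc_eq_integral_Ioc]

theorem integral_le_integral_of_forall_meas_le {α : Type*} [MeasurableSpace α] {μ : Measure α}
    {f g : α → ℝ} (hf : 0 ≤ᵐ[μ] f) (hfm : AEMeasurable f μ) (hg : 0 ≤ᵐ[μ] g)
    (hgi : Integrable g μ) (h : ∀ t > 0, μ {x | t ≤ f x} ≤ μ {x | t ≤ g x}) :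
    ∫ x, f x ∂μ ≤ ∫ x, g x ∂μ := by
  rw [integral_eq_lintegral_of_nonneg_ae hf hfm.aestronglyMeasurable,
    integral_eq_lintegral_of_nonneg_ae hg hgi.aestronglyMeasurable]
  refine ENNReal.toReal_mono hgi.lintegral_lt_top.ne ?_
  rw [lintegral_eq_lintegral_meas_le μ hf hfm, lintegral_eq_lintegral_meas_le μ hg hgi.aemeasurable]
  exact setLIntegral_mono' measurableSet_Ioi h

theorem volume_Ioc_inter_thickening_le {a b r : ℝ} (hr : 0 ≤ r) {s : Finset ℝ} (hb : b ∈ s) :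
    volume (Ioc a b ∩ thickening r (s : Set ℝ)) ≤ ENNReal.ofReal ((2 * s.card - 1) * r) := by
  have hcover : Ioc a b ∩ thickening r (s : Set ℝ) ⊆ Ioc (b - r) b ∪ ⋃ c ∈ s.erase b, ball c r := by
    rintro x ⟨hx, hxs⟩
    rw [thickening_eq_biUnion_ball] at hxs
    obtain ⟨c, hc, hxc⟩ := mem_iUnion₂.1 hxs
    by_cases hcb : c = b
    · subst hcb
      rw [mem_ball, Real.dist_eq, abs_lt] at hxc
      exact Or.inl ⟨by linarith, hx.2⟩
    · exact Or.inr (mem_biUnion (Finset.mem_erase.2 ⟨hcb, hc⟩) hxc)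
  have hcard : ((s.card - 1 : ℕ) : ℝ) = s.card - 1 := by
    rw [Nat.cast_sub (Finset.card_pos.2 ⟨b, hb⟩), Nat.cast_one]
  calc volume (Ioc a b ∩ thickening r (s : Set ℝ))
      ≤ volume (Ioc (b - r) b) + ∑ c ∈ s.erase b, volume (ball c r) :=
        (measure_mono hcover).trans <| (measure_union_le _ _).trans <|
          add_le_add_right (measure_biUnion_finset_le _ _) _
    _ = ENNReal.ofReal r + ENNReal.ofReal ((s.card - 1 : ℕ) • (2 * r)) := by
        simp [Real.volume_ball, Finset.card_erase_of_mem hb]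
    _ = ENNReal.ofReal ((2 * s.card - 1) * r) := by
        rw [← ENNReal.ofReal_add hr (by positivity), nsmul_eq_mul, hcard]
        ring_nf

theorem integral_sub_div_sq {a b m : ℝ} :
    ∫ x in a..b, ((b - x) / m) ^ 2 = (b - a) ^ 3 / (3 * m ^ 2) := by
  simp only [div_pow, intervalIntegral.integral_div,
    intervalIntegral.integral_comp_sub_left (fun x => x ^ 2) b, integral_pow]
  ring

theorem le_integral_infDist_sq {a b : ℝ} (hab : a ≤ b) {n : ℕ} {s : Finset ℝ} (hb : b ∈ s)
    (hn : s.card ≤ n) :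
    (b - a) ^ 3 / (3 * (2 * (n : ℝ) - 1) ^ 2) ≤ ∫ x in a..b, infDist x (s : Set ℝ) ^ 2 := by
  set m : ℝ := 2 * n - 1
  have hcard : (s.card : ℝ) ≤ n := by exact_mod_cast hn
  have hm : 1 ≤ m := by
    have : (1 : ℝ) ≤ s.card := by exact_mod_cast Finset.card_pos.2 ⟨b, hb⟩
    linarith
  rw [← integral_sub_div_sq, intervalIntegral.integral_of_le hab,
    intervalIntegral.integral_of_le hab]
  refine integral_le_integral_of_forall_meas_le (ae_of_all _ fun _ => sq_nonneg _) (by fun_prop)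
    (ae_of_all _ fun _ => sq_nonneg _)
    (((continuous_infDist_pt _).pow 2).integrableOn_Icc.mono_set Ioc_subset_Icc_self)
    fun t ht => ?_
  have hr : 0 ≤ m * √t := by positivity
  rw [Measure.restrict_apply' measurableSet_Ioc, Measure.restrict_apply' measurableSet_Ioc]
  calc volume ({x | t ≤ ((b - x) / m) ^ 2} ∩ Ioc a b)
      ≤ volume (Ioc a (b - m * √t)) := by
        refine measure_mono fun x ⟨hxt, hx⟩ => ⟨hx.1, ?_⟩
        have : √t ≤ (b - x) / m :=
          (Real.sqrt_le_left (div_nonneg (sub_nonneg.2 hx.2) (by linarith))).mpr hxt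
        rw [le_div_iff₀ (by linarith)] at this
        linarith
    _ = ENNReal.ofReal (b - a) - ENNReal.ofReal (m * √t) := by
        rw [Real.volume_Ioc, ← ENNReal.ofReal_sub _ hr]
        ring_nf
    _ ≤ volume (Ioc a b) - volume (Ioc a b ∩ thickening √t (s : Set ℝ)) := by
        rw [Real.volume_Ioc]
        refine tsub_le_tsub_left ((volume_Ioc_inter_thickening_le (Real.sqrt_nonneg t) hb).trans
          (ENNReal.ofReal_le_ofReal ?_)) _
        gcongr
        linarith
    _ ≤ volume (Ioc a b \ thickening √t (s : Set ℝ)) := by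
        rw [← sdiff_inter_self_eq_sdiff, inter_comm]
        exact le_measure_sdiff
    _ ≤ volume ({x | t ≤ infDist x (s : Set ℝ) ^ 2} ∩ Ioc a b) := by
        refine measure_mono fun x ⟨hx, hxs⟩ => ⟨?_, hx⟩
        rw [mem_thickening_iff_infDist_lt ⟨b, hb⟩, not_lt] at hxs
        exact (Real.sqrt_le_left infDist_nonneg).mp hxs

theorem intervalIntegrable_infDist_sq (s : Set ℝ) (x y : ℝ) :
    IntervalIntegrable (fun t => infDist t s ^ 2) volume x y :=
  ((continuous_infDist_pt s).pow 2).intervalIntegrable x y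

theorem integral_infDist_sq_le_of_mem {s : Set ℝ} {c x y : ℝ} (hc : c ∈ s) (hxy : x ≤ y) :
    ∫ t in x..y, infDist t s ^ 2 ≤ ((y - c) ^ 3 - (x - c) ^ 3) / 3 := by
  calc ∫ t in x..y, infDist t s ^ 2 ≤ ∫ t in x..y, (t - c) ^ 2 := by
        refine intervalIntegral.integral_mono_on hxy
          (intervalIntegrable_infDist_sq s x y)
          ((by fun_prop : Continuous fun t => (t - c) ^ 2).intervalIntegrable x y) fun t _ => ?_
        rw [← sq_abs (t - c), ← Real.dist_eq]
        exact pow_le_pow_left₀ infDist_nonneg (infDist_le_dist_of_mem hc) 2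
    _ = ((y - c) ^ 3 - (x - c) ^ 3) / 3 := by
        rw [intervalIntegral.integral_comp_sub_right (fun t => t ^ 2), integral_pow]
        ring

theorem integral_infDist_sq_le_of_grid_even {s : Set ℝ} {a h : ℝ} (hh : 0 ≤ h) {k : ℕ}
    (hs : ∀ j < k, a + (2 * j + 1) * h ∈ s) :
    ∫ t in a..a + 2 * k * h, infDist t s ^ 2 ≤ 2 * k * h ^ 3 / 3 := by
  induction k with
  | zero => simp
  | succ k ih =>
    rw [← intervalIntegral.integral_add_adjacent_intervals
      (intervalIntegrable_infDist_sq s _ (a + 2 * k * h)) (intervalIntegrable_infDist_sq s _ _)]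
    have hcell := integral_infDist_sq_le_of_mem (hs k k.lt_succ_self)
      (show a + 2 * k * h ≤ a + 2 * ↑(k + 1) * h by push_cast; nlinarith)
    have := ih fun j hj => hs j (hj.trans k.lt_succ_self)
    push_cast at hcell ⊢
    linarith [show ((a + 2 * (k + 1) * h - (a + (2 * k + 1) * h)) ^ 3
      - (a + 2 * k * h - (a + (2 * k + 1) * h)) ^ 3) / 3 = 2 * h ^ 3 / 3 by ring]

theorem integral_infDist_sq_le_of_grid_odd {s : Set ℝ} {a h : ℝ} (hh : 0 ≤ h) {k : ℕ}
    (hs : ∀ j ≤ k, a + (2 * j + 1) * h ∈ s) :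
    ∫ t in a..a + (2 * k + 1) * h, infDist t s ^ 2 ≤ (2 * k + 1) * h ^ 3 / 3 := by
  rw [← intervalIntegral.integral_add_adjacent_intervals
    (intervalIntegrable_infDist_sq s _ (a + 2 * k * h)) (intervalIntegrable_infDist_sq s _ _)]
  have hcell := integral_infDist_sq_le_of_mem (hs k le_rfl)
    (show a + 2 * k * h ≤ a + (2 * k + 1) * h by nlinarith)
  have := integral_infDist_sq_le_of_grid_even hh fun j hj => hs j hj.le
  linarith [show ((a + (2 * k + 1) * h - (a + (2 * k + 1) * h)) ^ 3
    - (a + 2 * k * h - (a + (2 * k + 1) * h)) ^ 3) / 3 = h ^ 3 / 3 by ring]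

theorem distortion_uniformOn_grid_le {a b : ℝ} (hab : a < b) {n : ℕ} (hn : 1 ≤ n) :
    distortion (uniformOn a b)
        ((fun j : ℕ => a + (2 * (j : ℝ) - 1) * (b - a) / (2 * (n : ℝ) - 1)) '' Set.Icc 1 n)
      ≤ (b - a) ^ 2 / (3 * (2 * (n : ℝ) - 1) ^ 2) := by
  obtain ⟨k, rfl⟩ : ∃ k, n = k + 1 := ⟨n - 1, by omega⟩
  have hm : (2 * ((k + 1 : ℕ) : ℝ) - 1) = 2 * k + 1 := by push_cast; ring
  have hm0 : (0 : ℝ) < 2 * k + 1 := by positivity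
  set h := (b - a) / (2 * k + 1)
  have hb : a + (2 * k + 1) * h = b := by simp only [h]; field_simp; ring
  rw [distortion_uniformOn hab ((finite_Icc 1 (k + 1)).image _), hm]
  set Γ := (fun j : ℕ => a + (2 * (j : ℝ) - 1) * (b - a) / (2 * k + 1)) '' Icc 1 (k + 1)
  have hgrid : ∫ x in a..b, infDist x Γ ^ 2 ≤ (2 * k + 1) * h ^ 3 / 3 := by
    rw [← hb]
    exact integral_infDist_sq_le_of_grid_odd (div_nonneg (sub_nonneg.2 hab.le) hm0.le)
      fun j hj => ⟨j + 1, ⟨by omega, by omega⟩, by push_cast; ring⟩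
  calc (b - a)⁻¹ * ∫ x in a..b, infDist x Γ ^ 2
      ≤ (b - a)⁻¹ * ((2 * k + 1) * h ^ 3 / 3) :=
        mul_le_mul_of_nonneg_left hgrid (inv_nonneg.2 (sub_nonneg.2 hab.le))
    _ = (b - a) ^ 2 / (3 * (2 * k + 1) ^ 2) := by
        simp only [h]
        field_simp [(sub_pos.2 hab).ne']

theorem le_distortion_uniformOn {a b : ℝ} (hab : a < b) {n : ℕ} {γ : Set ℝ} (hγ : γ.Finite)
    (hb : b ∈ γ) (hn : γ.ncard ≤ n) :
    (b - a) ^ 2 / (3 * (2 * (n : ℝ) - 1) ^ 2) ≤ distortion (uniformOn a b) γ := by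
  obtain ⟨s, rfl⟩ := hγ.exists_finset_coe
  rw [ncard_coe_finset] at hn
  rw [distortion_uniformOn hab hγ]
  calc (b - a) ^ 2 / (3 * (2 * (n : ℝ) - 1) ^ 2)
      = (b - a)⁻¹ * ((b - a) ^ 3 / (3 * (2 * (n : ℝ) - 1) ^ 2)) := by
        field_simp [(sub_pos.2 hab).ne']
    _ ≤ (b - a)⁻¹ * ∫ x in a..b, infDist x (s : Set ℝ) ^ 2 :=
        mul_le_mul_of_nonneg_left (le_integral_infDist_sq hab.le hb hn)
          (inv_nonneg.2 (sub_nonneg.2 hab.le))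

/-- Conditional quantization for the uniform distribution on `[a,b]` with conditional set `{b}`:
the error is `(b-a)²/(3(2n-1)²)`, attained by `{a + (2j-1)(b-a)/(2n-1) : 1 ≤ j ≤ n}`. -/
theorem stmt4 (a b : ℝ) (hab : a < b) (n : ℕ) (hn : 1 ≤ n) :
    condQuantError (uniformOn a b) {b} n = (b - a) ^ 2 / (3 * (2 * (n : ℝ) - 1) ^ 2)
    ∧ distortion (uniformOn a b)
        ((fun j : ℕ => a + (2 * (j : ℝ) - 1) * (b - a) / (2 * (n : ℝ) - 1)) '' Set.Icc 1 n)
      = (b - a) ^ 2 / (3 * (2 * (n : ℝ) - 1) ^ 2) := by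
  set Γ := (fun j : ℕ => a + (2 * (j : ℝ) - 1) * (b - a) / (2 * (n : ℝ) - 1)) '' Set.Icc 1 n
  have hΓ : Γ.Finite := (finite_Icc 1 n).image _
  have hm : 2 * (n : ℝ) - 1 ≠ 0 := by
    have : (1 : ℝ) ≤ n := by exact_mod_cast hn
    linarith
  have hbΓ : b ∈ Γ := ⟨n, ⟨hn, le_rfl⟩, by field_simp; ring⟩
  have hΓcard : Γ.ncard ≤ n := (ncard_image_le (finite_Icc 1 n)).trans (by simp)
  have hdist := le_antisymm (distortion_uniformOn_grid_le hab hn)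
    (le_distortion_uniformOn hab hΓ hbΓ hΓcard)
  refine ⟨IsLeast.csInf_eq ⟨⟨Γ \ {b}, hΓ.sdiff, ?_, ?_⟩, ?_⟩, hdist⟩
  · rw [ncard_sdiff_singleton_of_mem hbΓ, ncard_singleton]
    omega
  · rw [sdiff_union_self, union_eq_self_of_subset_right (singleton_subset_iff.2 hbΓ), hdist]
  · rintro _ ⟨α, hα, hαcard, rfl⟩
    refine le_distortion_uniformOn hab (hα.union (finite_singleton b)) (Or.inr rfl) ?_
    rw [ncard_singleton] at hαcard
    calc (α ∪ {b}).ncard ≤ α.ncard + 1 := by simpa using ncard_union_le α {b}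
      _ ≤ n := by omega
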